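/- Shift invariance of the wrap-around discrepancy for lattice-based Latin hypercube designs: let d ≥ 1 and n ≥ 1 be integers, let v ∈ ℤ^d have every entry coprime to n, and let δ, δ̃ ∈ ℤ^d. Then c_WD(L(n,v,δ)) = c_WD(L(n,v,δ̃)); that is, the wrap-around discrepancy of L(n,v,δ) does not depend on the shift vector δ. -/

import Mathlib

/-!
Translating L(n,v,δ) by (δ' - δ)/n and reducing every coordinate modulo 1 is a bijection onto
L(n,v,δ'): the coordinates of a design point are odd multiples of 1/(2n), so they lie in [0,1),
where reduction modulo 1 is the identity and the reverse shift undoes the map. The kernel of the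
wrap-around discrepancy depends on x - y only through the 1-periodic function `nid`, and the
bijection changes each x k - y k by an integer, so both double sums agree.
-/

open Finset

/-- Distance from a real number to the nearest integer: w(t) = min over z in ZZ of |t - z|. -/
noncomputable def nid (t : ℝ) : ℝ := ⨅ z : ℤ, |t - (z : ℝ)|

/-- Wrap-around distance on ℝ^d. -/
noncomputable def wdist {d : ℕ} (u : Fin d → ℝ) : ℝ := Real.sqrt (∑ k, nid (u k) ^ 2)

/-- Lattice-based Latin hypercube design
L(n,v,δ) = { z + i·v/n + δ/n + 1_d/(2n) : z ∈ ℤ^d, i ∈ ℤ } ∩ [0,1]^d. -/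
def LHDset (d n : ℕ) (v : Fin d → ℤ) (δ : Fin d → ℝ) : Set (Fin d → ℝ) :=
  {x | (∃ (z : Fin d → ℤ) (i : ℤ),
          x = fun k => (z k : ℝ) + (i : ℝ) * (v k : ℝ) / n + δ k / n + 1 / (2 * n)) ∧
       ∀ k, x k ∈ Set.Icc (0 : ℝ) 1}

lemma nid_add_intCast (t : ℝ) (m : ℤ) : nid (t + m) = nid t := by
  unfold nid
  rw [← (Equiv.addRight m).iInf_comp]
  congr! 2 with z
  simp only [Equiv.coe_addRight, Int.cast_add]
  ring_nf

lemma finsum_mem_finsum_mem_eq_of_bijOn {α β M : Type*} [AddCommMonoid M]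
    {s : Set α} {t : Set β} {f : α → α → M} {g : β → β → M} (e : α → β) (he : Set.BijOn e s t)
    (hfg : ∀ x ∈ s, ∀ y ∈ s, f x y = g (e x) (e y)) :
    ∑ᶠ x ∈ s, ∑ᶠ y ∈ s, f x y = ∑ᶠ x ∈ t, ∑ᶠ y ∈ t, g x y :=
  finsum_mem_eq_of_bijOn e he fun x hx => finsum_mem_eq_of_bijOn e he (hfg x hx)

/-- Translation by `c` on the torus, with representatives taken in `[0,1)^d`. -/
noncomputable def fractShift {d : ℕ} (c x : Fin d → ℝ) : Fin d → ℝ :=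
  fun k => Int.fract (x k + c k)

section fractShift

variable {d : ℕ}

lemma nid_fractShift_sub (c x y : Fin d → ℝ) (k : Fin d) (t : ℝ) :
    nid (fractShift c x k - fractShift c y k + t) = nid (x k - y k + t) := by
  have h : fractShift c x k - fractShift c y k + t
      = x k - y k + t + ((⌊y k + c k⌋ - ⌊x k + c k⌋ : ℤ) : ℝ) := by
    simp only [fractShift, Int.fract, Int.cast_sub]
    ring
  rw [h, nid_add_intCast]

lemma fractShift_fractShift_of_mem_Ico {c c' x : Fin d → ℝ} (hcc' : ∀ k, c k + c' k = 0)
    (hx : ∀ k, x k ∈ Set.Ico (0 : ℝ) 1) : fractShift c' (fractShift c x) = x := by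
  funext k
  have h : Int.fract (x k + c k) + c' k = x k - (⌊x k + c k⌋ : ℤ) := by
    rw [Int.fract]
    linarith [hcc' k]
  rw [fractShift, fractShift, h, Int.fract_sub_intCast, Int.fract_eq_self]
  exact hx k

end fractShift

section LHDset

variable {d n : ℕ} (v : Fin d → ℤ)

lemma mapsTo_fractShift_LHDset (δ δ' : Fin d → ℝ) :
    Set.MapsTo (fractShift fun k => (δ' k - δ k) / n) (LHDset d n v δ) (LHDset d n v δ') := by
  rintro _ ⟨⟨z, i, rfl⟩, -⟩
  refine ⟨⟨fun k => z k - ⌊(z k : ℝ) + i * v k / n + δ k / n + 1 / (2 * n)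
      + (δ' k - δ k) / n⌋, i, ?_⟩, fun k => ?_⟩
  · funext k
    simp only [fractShift, Int.fract, Int.cast_sub]
    ring
  · exact ⟨Int.fract_nonneg _, (Int.fract_lt_one _).le⟩

lemma mem_Ico_of_mem_LHDset (hn : 1 ≤ n) {δ : Fin d → ℤ} {x : Fin d → ℝ}
    (hx : x ∈ LHDset d n v fun k => (δ k : ℝ)) (k : Fin d) : x k ∈ Set.Ico (0 : ℝ) 1 := by
  obtain ⟨⟨z, i, rfl⟩, hx⟩ := hx
  refine ⟨(hx k).1, lt_of_le_of_ne (hx k).2 fun h1 => ?_⟩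
  have hnR : (n : ℝ) ≠ 0 := by positivity
  have hodd : ((2 * (n * z k + i * v k + δ k) + 1 : ℤ) : ℝ) = ((2 * n : ℤ) : ℝ) := by
    push_cast
    field_simp at h1
    linarith
  have := Int.cast_injective hodd
  omega

lemma bijOn_fractShift_LHDset (hn : 1 ≤ n) (δ δ' : Fin d → ℤ) :
    Set.BijOn (fractShift fun k => ((δ' k : ℝ) - δ k) / n)
      (LHDset d n v fun k => (δ k : ℝ)) (LHDset d n v fun k => (δ' k : ℝ)) := by
  have hcc' : ∀ k, ((δ' k : ℝ) - δ k) / n + ((δ k : ℝ) - δ' k) / n = 0 := fun k => by ring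
  refine Set.InvOn.bijOn (f' := fractShift fun k => ((δ k : ℝ) - δ' k) / n)
    ⟨fun x hx => ?_, fun y hy => ?_⟩
    (mapsTo_fractShift_LHDset v _ _) (mapsTo_fractShift_LHDset v _ _)
  · exact fractShift_fractShift_of_mem_Ico hcc' (mem_Ico_of_mem_LHDset v hn hx)
  · exact fractShift_fractShift_of_mem_Ico (fun k => by linarith [hcc' k])
      (mem_Ico_of_mem_LHDset v hn hy)

end LHDset

theorem stmt_8_general (d n : ℕ) (hn : 1 ≤ n) (v δ δ' : Fin d → ℤ)
    (S S' : Set (Fin d → ℝ))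
    (hS : S = LHDset d n v (fun k => (δ k : ℝ)))
    (hS' : S' = LHDset d n v (fun k => (δ' k : ℝ))) :
    Real.sqrt ((1 / (n : ℝ) ^ 2) * (∑ᶠ x ∈ S, ∑ᶠ y ∈ S,
        ∏ k, ((1.25 : ℝ) + nid (x k - y k + 1 / 2) ^ 2)) - (4 / 3 : ℝ) ^ d)
      = Real.sqrt ((1 / (n : ℝ) ^ 2) * (∑ᶠ x ∈ S', ∑ᶠ y ∈ S',
        ∏ k, ((1.25 : ℝ) + nid (x k - y k + 1 / 2) ^ 2)) - (4 / 3 : ℝ) ^ d) := by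
  subst hS hS'
  congr 3
  exact finsum_mem_finsum_mem_eq_of_bijOn _ (bijOn_fractShift_LHDset v hn δ δ')
    fun x _ y _ => by simp only [nid_fractShift_sub]

/-- shift invariance of the wrap-around discrepancy of L(n,v,δ). -/
theorem stmt_8 (d n : ℕ) (hd : 1 ≤ d) (hn : 1 ≤ n) (v δ δ' : Fin d → ℤ)
    (hco : ∀ k, IsCoprime (v k) (n : ℤ))
    (S S' : Set (Fin d → ℝ))
    (hS : S = LHDset d n v (fun k => (δ k : ℝ)))
    (hS' : S' = LHDset d n v (fun k => (δ' k : ℝ))) :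
    Real.sqrt ((1 / (n : ℝ) ^ 2) * (∑ᶠ x ∈ S, ∑ᶠ y ∈ S,
        ∏ k, ((1.25 : ℝ) + nid (x k - y k + 1 / 2) ^ 2)) - (4 / 3 : ℝ) ^ d)
      = Real.sqrt ((1 / (n : ℝ) ^ 2) * (∑ᶠ x ∈ S', ∑ᶠ y ∈ S',
        ∏ k, ((1.25 : ℝ) + nid (x k - y k + 1 / 2) ^ 2)) - (4 / 3 : ℝ) ^ d) :=
  stmt_8_general d n hn v δ δ' S S' hS hS'
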